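/- Define for each binary tree T the Tamari polynomial B_T(x) recursively by B_∅ = 1 and B_T(x) = x·B_L(x)·(x·B_R(x) − B_R(1))/(x − 1), where L and R are the left and right subtrees of T. Then B_T(x) = Σ_{T' ≤ T} x^{g(T')}, summed over binary trees T' less than or equal to T in the Tamari order, where g(T') is the number of nodes on the leftmost branch of T'; in particular B_T(1) equals the number of trees below or equal to T in the Tamari lattice. -/

import Mathlib

/-- Unlabelled binary trees. -/
inductive Tree0 where
  | leaf : Tree0
  | node : Tree0 → Tree0 → Tree0
deriving DecidableEq

namespace Tree0

/-- Number of nodes on the leftmost branch (following only left-child edges). -/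
def leftBranch : Tree0 → ℕ
  | leaf => 0
  | node l _ => leftBranch l + 1

/-- One right rotation somewhere in the tree: `y(x(A,B),C) ↦ x(A,y(B,C))`. -/
inductive Rot : Tree0 → Tree0 → Prop
  | root (A B C : Tree0) : Rot (node (node A B) C) (node A (node B C))
  | left {l l' : Tree0} (r : Tree0) : Rot l l' → Rot (node l r) (node l' r)
  | right (l : Tree0) {r r' : Tree0} : Rot r r' → Rot (node l r) (node l r')

/-- The Tamari order: transitive closure of right rotation. -/
def tamariLE : Tree0 → Tree0 → Prop := Relation.ReflTransGen Rot

end Tree0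

open Polynomial

/-- The operator `g ↦ (x·g(x) − g(1))/(x−1)`, an exact division by the monic `X - 1`. -/
noncomputable def deltaPoly (p : Polynomial ℤ) : Polynomial ℤ :=
  (Polynomial.X * p - Polynomial.C (p.eval 1)) /ₘ (Polynomial.X - Polynomial.C 1)

/-!
The trees below `node L R` in the Tamari order are exactly the trees `graft S R' k` with
`S ≤ L`, `R' ≤ R` and `k ≤ g(R')`: walk `k` steps down the left branch of `R'` and insert there
a new node whose left subtree is `S`. These parameters are recovered from the tree, and the new
tree has left branch of length `k + g(S) + 1`. Hence `x·B_L(x)·∑_{R' ≤ R} ∑_{k ≤ g(R')} x^k`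
enumerates the interval below `node L R` by left branch length, and the inner double sum is
`(x·B_R(x) − B_R(1))/(x − 1)` by the geometric series.
-/

namespace Tree0

open Finset

def size : Tree0 → ℕ
  | leaf => 0
  | node l r => size l + size r + 1

/-- `graft S R k` inserts a node with left subtree `S` at depth `k` of the left branch of `R`;
it is only meaningful for `k ≤ leftBranch R`. -/
def graft (S : Tree0) : Tree0 → ℕ → Tree0
  | R, 0 => node S R
  | node l r, k + 1 => node (graft S l k) r
  | leaf, _ + 1 => node S leaf

@[simp] lemma graft_zero (S R : Tree0) : graft S R 0 = node S R := by
  cases R <;> rfl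

@[simp] lemma graft_succ (S l r : Tree0) (k : ℕ) :
    graft S (node l r) (k + 1) = node (graft S l k) r := rfl

lemma size_graft (S : Tree0) : ∀ (R : Tree0) (k : ℕ),
    size (graft S R k) = size S + size R + 1
  | R, 0 => by simp [size]
  | node l r, k + 1 => by simp [size, size_graft S l k]; omega
  | leaf, _ + 1 => by simp [graft, size]

lemma leftBranch_graft (S : Tree0) : ∀ (R : Tree0) (k : ℕ), k ≤ leftBranch R →
    leftBranch (graft S R k) = k + leftBranch S + 1
  | R, 0, _ => by simp [leftBranch]
  | node l r, k + 1, h => by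
      simp only [leftBranch, graft_succ, add_le_add_iff_right] at h ⊢
      rw [leftBranch_graft S l k h]; omega
  | leaf, _ + 1, h => by simp [leftBranch] at h

/-- Grafting a tree of fixed size is injective; the size is what locates the inserted node. -/
lemma graft_inj_of_size_eq : ∀ {S S' R R' : Tree0} {k k' : ℕ},
    k ≤ leftBranch R → k' ≤ leftBranch R' → size S = size S' →
    graft S R k = graft S' R' k' → S = S' ∧ R = R' ∧ k = k'
  | _, _, _, _, 0, 0, _, _, _, h => by simp_all
  | S, S', R, node l r, 0, k' + 1, _, _, hs, h => by
      simp only [graft_zero, graft_succ, node.injEq] at h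
      have := size_graft S' l k'
      rw [← h.1] at this; omega
  | S, S', node l r, R', k + 1, 0, _, _, hs, h => by
      simp only [graft_zero, graft_succ, node.injEq] at h
      have := size_graft S l k
      rw [h.1] at this; omega
  | _, _, node _ _, node _ _, _ + 1, _ + 1, hk, hk', hs, h => by
      simp only [leftBranch, graft_succ, node.injEq, add_le_add_iff_right] at hk hk' h
      obtain ⟨hS, hl, rfl⟩ := graft_inj_of_size_eq hk hk' hs h.1
      exact ⟨hS, by rw [hl, h.2], rfl⟩
  | _, _, leaf, _, _ + 1, _, hk, _, _, _ => by simp [leftBranch] at hk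
  | _, _, node _ _, leaf, _ + 1, _ + 1, _, hk', _, _ => by simp [leftBranch] at hk'

lemma rot_node_cases {a l r : Tree0} (h : Rot a (node l r)) :
    (∃ B C, r = node B C ∧ a = node (node l B) C) ∨
    (∃ l', Rot l' l ∧ a = node l' r) ∨
    (∃ r', Rot r' r ∧ a = node l r') := by
  generalize hb : node l r = b at h
  cases h with
  | root A B C =>
      cases hb
      exact Or.inl ⟨B, C, rfl, rfl⟩
  | left _ hl =>
      cases hb
      exact Or.inr (Or.inl ⟨_, hl, rfl⟩)
  | right _ hr =>
      cases hb
      exact Or.inr (Or.inr ⟨_, hr, rfl⟩)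

lemma rot_graft_cases {a S R : Tree0} {k : ℕ} (hk : k ≤ leftBranch R)
    (h : Rot a (graft S R k)) :
    (∃ S', Rot S' S ∧ a = graft S' R k) ∨
    (∃ R' k', Rot R' R ∧ k' ≤ leftBranch R' ∧ a = graft S R' k') ∨
    (k + 1 ≤ leftBranch R ∧ a = graft S R (k + 1)) := by
  induction k generalizing a R with
  | zero =>
    rw [graft_zero] at h
    rcases rot_node_cases h with ⟨B, C, rfl, rfl⟩ | ⟨S', hS', rfl⟩ | ⟨R', hR', rfl⟩
    · exact Or.inr (Or.inr ⟨by simp [leftBranch], by simp⟩)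
    · exact Or.inl ⟨S', hS', by simp⟩
    · exact Or.inr (Or.inl ⟨R', 0, hR', Nat.zero_le _, by simp⟩)
  | succ k ih =>
    obtain ⟨l, r, rfl⟩ : ∃ l r, R = node l r := by
      cases R with
      | leaf => simp [leftBranch] at hk
      | node l r => exact ⟨l, r, rfl⟩
    simp only [leftBranch, add_le_add_iff_right] at hk ⊢
    rw [graft_succ] at h
    rcases rot_node_cases h with ⟨B, C, rfl, rfl⟩ | ⟨a', ha', rfl⟩ | ⟨r', hr', rfl⟩
    · refine Or.inr (Or.inl ⟨node (node l B) C, k + 2, Rot.root l B C, ?_, by simp⟩)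
      simp only [leftBranch]; omega
    · rcases ih hk ha' with ⟨S', hS', rfl⟩ | ⟨l', k', hl', hk', rfl⟩ | ⟨hlt, rfl⟩
      · exact Or.inl ⟨S', hS', by simp⟩
      · refine Or.inr (Or.inl ⟨node l' r, k' + 1, Rot.left r hl', ?_, by simp⟩)
        simpa [leftBranch] using hk'
      · exact Or.inr (Or.inr ⟨hlt, by simp⟩)
    · exact Or.inr (Or.inl ⟨node l r', k + 1, Rot.right l hr', by simpa [leftBranch], by simp⟩)

lemma tamariLE.node_left {l l' : Tree0} (r : Tree0) (h : tamariLE l l') :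
    tamariLE (node l r) (node l' r) :=
  Relation.ReflTransGen.lift (node · r) (fun _ _ => Rot.left r) _ _ h

lemma tamariLE.node_right (l : Tree0) {r r' : Tree0} (h : tamariLE r r') :
    tamariLE (node l r) (node l r') :=
  Relation.ReflTransGen.lift (node l ·) (fun _ _ => Rot.right l) _ _ h

lemma graft_tamariLE (S : Tree0) : ∀ (R : Tree0) (k : ℕ), k ≤ leftBranch R →
    tamariLE (graft S R k) (node S R)
  | R, 0, _ => by rw [graft_zero]; exact .refl
  | node l r, k + 1, h => by
      simp only [leftBranch, add_le_add_iff_right] at h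
      rw [graft_succ]
      exact (tamariLE.node_left r (graft_tamariLE S l k h)).tail (Rot.root S l r)
  | leaf, _ + 1, h => by simp [leftBranch] at h

def lowerSet : Tree0 → Finset Tree0
  | leaf => {leaf}
  | node L R =>
      (((lowerSet R).sigma fun R' => range (leftBranch R' + 1)) ×ˢ lowerSet L).image
        fun p => graft p.2 p.1.1 p.1.2

lemma mem_lowerSet_node {x L R : Tree0} : x ∈ lowerSet (node L R) ↔
    ∃ R' ∈ lowerSet R, ∃ k ≤ leftBranch R', ∃ S ∈ lowerSet L, graft S R' k = x := by
  simp only [lowerSet, mem_image, mem_product, mem_sigma, mem_range, Nat.lt_succ_iff,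
    Prod.exists, Sigma.exists]
  constructor
  · rintro ⟨R', k, S, ⟨⟨hR', hk⟩, hS⟩, rfl⟩
    exact ⟨R', hR', k, hk, S, hS, rfl⟩
  · rintro ⟨R', hR', k, hk, S, hS, rfl⟩
    exact ⟨R', k, S, ⟨⟨hR', hk⟩, hS⟩, rfl⟩

lemma self_mem_lowerSet : ∀ T : Tree0, T ∈ lowerSet T
  | leaf => mem_singleton_self _
  | node L R => mem_lowerSet_node.2
      ⟨R, self_mem_lowerSet R, 0, Nat.zero_le _, L, self_mem_lowerSet L, graft_zero L R⟩

lemma size_of_mem_lowerSet : ∀ {T x : Tree0}, x ∈ lowerSet T → size x = size T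
  | leaf, _, hx => by rw [mem_singleton.1 hx]
  | node L R, _, hx => by
      obtain ⟨R', hR', k, -, S, hS, rfl⟩ := mem_lowerSet_node.1 hx
      rw [size_graft, size_of_mem_lowerSet hS, size_of_mem_lowerSet hR', size]

lemma mem_lowerSet_of_rot : ∀ {T a b : Tree0}, Rot a b → b ∈ lowerSet T → a ∈ lowerSet T
  | leaf, _, _, h, hb => by rw [mem_singleton.1 hb] at h; cases h
  | node L R, _, _, h, hb => by
      obtain ⟨R', hR', k, hk, S, hS, rfl⟩ := mem_lowerSet_node.1 hb
      rcases rot_graft_cases hk h with ⟨S', hS', rfl⟩ | ⟨R'', k', hR'', hk', rfl⟩ | ⟨hlt, rfl⟩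
      · exact mem_lowerSet_node.2 ⟨R', hR', k, hk, S', mem_lowerSet_of_rot hS' hS, rfl⟩
      · exact mem_lowerSet_node.2 ⟨R'', mem_lowerSet_of_rot hR'' hR', k', hk', S, hS, rfl⟩
      · exact mem_lowerSet_node.2 ⟨R', hR', k + 1, hlt, S, hS, rfl⟩

lemma tamariLE_of_mem_lowerSet : ∀ {T x : Tree0}, x ∈ lowerSet T → tamariLE x T
  | leaf, _, hx => by rw [mem_singleton.1 hx]; exact .refl
  | node L R, _, hx => by
      obtain ⟨R', hR', k, hk, S, hS, rfl⟩ := mem_lowerSet_node.1 hx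
      exact (graft_tamariLE S R' k hk).trans
        ((tamariLE.node_right S (tamariLE_of_mem_lowerSet hR')).trans
          (tamariLE.node_left R (tamariLE_of_mem_lowerSet hS)))

lemma mem_lowerSet_iff {T x : Tree0} : x ∈ lowerSet T ↔ tamariLE x T := by
  refine ⟨tamariLE_of_mem_lowerSet, fun hx => ?_⟩
  induction hx using Relation.ReflTransGen.head_induction_on with
  | refl => exact self_mem_lowerSet T
  | head hab _ ih => exact mem_lowerSet_of_rot hab ih

lemma sum_lowerSet_node {M : Type*} [AddCommMonoid M] (L R : Tree0) (f : Tree0 → M) :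
    ∑ x ∈ lowerSet (node L R), f x =
      ∑ R' ∈ lowerSet R, ∑ k ∈ range (leftBranch R' + 1), ∑ S ∈ lowerSet L,
        f (graft S R' k) := by
  rw [lowerSet, sum_image, sum_product, sum_sigma]
  rintro ⟨⟨R₁, k₁⟩, S₁⟩ h₁ ⟨⟨R₂, k₂⟩, S₂⟩ h₂ h
  simp only [coe_product, coe_sigma, Set.mem_prod, Set.mem_sigma_iff, mem_coe, mem_range,
    Nat.lt_succ_iff] at h₁ h₂
  obtain ⟨rfl, rfl, rfl⟩ := graft_inj_of_size_eq h₁.1.2 h₂.1.2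
    (by rw [size_of_mem_lowerSet h₁.2, size_of_mem_lowerSet h₂.2]) h
  rfl

end Tree0

open Finset

lemma deltaPoly_sum_X_pow {ι : Type*} (s : Finset ι) (a : ι → ℕ) :
    deltaPoly (∑ i ∈ s, X ^ a i) = ∑ i ∈ s, ∑ k ∈ range (a i + 1), X ^ k := by
  have hfactor : X * ∑ i ∈ s, X ^ a i - C ((∑ i ∈ s, (X : ℤ[X]) ^ a i).eval 1) =
      (X - C 1) * ∑ i ∈ s, ∑ k ∈ range (a i + 1), X ^ k := by
    simp only [C_1, mul_sum s, mul_geom_sum, eval_finsetSum, eval_pow, eval_X, one_pow, sum_const,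
      sum_sub_distrib, pow_succ']
    simp
  rw [deltaPoly, hfactor, mul_divByMonic_cancel_left _ (monic_X_sub_C 1)]

lemma coeff_sum_X_pow {R ι : Type*} [Semiring R] (s : Finset ι) (a : ι → ℕ) (m : ℕ) :
    (∑ i ∈ s, (X : R[X]) ^ a i).coeff m = #{i ∈ s | a i = m} := by
  simp [finsetSum_coeff, coeff_X_pow, sum_boole, eq_comm]

lemma eval_one_sum_X_pow {R ι : Type*} [Semiring R] (s : Finset ι) (a : ι → ℕ) :
    (∑ i ∈ s, (X : R[X]) ^ a i).eval 1 = #s := by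
  simp [eval_finsetSum, eval_X_pow]

namespace Tree0

lemma eq_sum_lowerSet (B : Tree0 → ℤ[X]) (hleaf : B leaf = 1)
    (hnode : ∀ l r : Tree0, B (node l r) = X * B l * deltaPoly (B r)) (T : Tree0) :
    B T = ∑ T' ∈ lowerSet T, X ^ leftBranch T' := by
  induction T with
  | leaf => simp [hleaf, lowerSet, leftBranch]
  | node L R ihL ihR =>
      rw [hnode, ihL, ihR, deltaPoly_sum_X_pow, sum_lowerSet_node]
      simp only [mul_sum, sum_mul]
      refine sum_congr rfl fun R' _ => sum_congr rfl fun k hk => sum_congr rfl fun S _ => ?_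
      rw [leftBranch_graft S R' k (Nat.lt_succ_iff.1 (mem_range.1 hk))]
      ring

end Tree0

/-- The Tamari polynomials, defined by `B_∅ = 1` and
`B_T(x) = x·B_L(x)·(x·B_R(x) − B_R(1))/(x−1)`, satisfy
`B_T(x) = Σ_{T' ≤ T} x^{g(T')}` (sum over trees below `T` in the Tamari order, `g` the
number of nodes on the leftmost branch); in particular `B_T(1)` counts the trees below
or equal to `T`. -/
theorem tamari_polynomial_counts (B : Tree0 → Polynomial ℤ)
    (hleaf : B Tree0.leaf = 1)
    (hnode : ∀ l r : Tree0,
      B (Tree0.node l r) = Polynomial.X * B l * deltaPoly (B r)) :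
    (∀ (T : Tree0) (m : ℕ),
      (B T).coeff m =
        (Set.ncard {T' : Tree0 | Tree0.tamariLE T' T ∧ T'.leftBranch = m} : ℤ)) ∧
    (∀ T : Tree0,
      (B T).eval 1 = (Set.ncard {T' : Tree0 | Tree0.tamariLE T' T} : ℤ)) := by
  have hB := Tree0.eq_sum_lowerSet B hleaf hnode
  refine ⟨fun T m => ?_, fun T => ?_⟩
  · rw [hB, coeff_sum_X_pow, ← Set.ncard_coe_finset]
    congr
    ext
    simp [Tree0.mem_lowerSet_iff]
  · rw [hB, eval_one_sum_X_pow, ← Set.ncard_coe_finset]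
    congr
    ext
    simp [Tree0.mem_lowerSet_iff]
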